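/- arXiv:2312.07689 — 7 statements merged into one kernel-verified Lean document; each statement's English description precedes it below -/
import Mathlib

section
/- Let λ ≠ 0 and γ > 1, with ℓ := 2/(γ−1). Let I ⊆ (0,∞) be an open interval and let V, C : I → ℝ be differentiable functions such that D(V(ξ),C(ξ)) ≠ 0 for all ξ ∈ I and which satisfy the similarity ODEs V′(ξ) = G(V(ξ),C(ξ)) / (ξ·D(V(ξ),C(ξ))) and C′(ξ) = F(V(ξ),C(ξ)) / (ξ·D(V(ξ),C(ξ))) for all ξ ∈ I. Define u(t,x) := −(1/λ)·(x/t)·V(t^{−1/λ}x) and c(t,x) := −(1/λ)·(x/t)·C(t^{−1/λ}x) for t > 0 and x > 0 with t^{−1/λ}x ∈ I. Then at every such point (t,x) the isentropic Euler equations in (u,c)-form hold: ∂_t u + u·∂_x u + ℓ·c·∂_x c = 0 and ∂_t c + u·∂_x c + ℓ^{−1}·c·∂_x u = 0. -/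
noncomputable def ell (γ : ℝ) : ℝ := 2 / (γ - 1)
noncomputable def Vstar (γ lam : ℝ) : ℝ := ell γ * (1 - lam)
noncomputable def k1 (γ lam : ℝ) : ℝ := (1 / ell γ - 1) * (lam - 1)
noncomputable def k0 (γ lam : ℝ) : ℝ := (lam - 1) / ell γ
noncomputable def Dfun (V C : ℝ) : ℝ := (1 + V) ^ 2 - C ^ 2
noncomputable def Gfun (γ lam V C : ℝ) : ℝ :=
  C ^ 2 * (V - Vstar γ lam) - V * (1 + V) * (lam + V)
noncomputable def Ffun (γ lam V C : ℝ) : ℝ :=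
  C * (C ^ 2 - (1 + V) ^ 2 + k1 γ lam * (1 + V) - k0 γ lam)

private theorem stmt0_aux1 (γ lam t x A v w : ℝ) (ht0 : t ≠ 0) (hx0 : x ≠ 0)
    (hlam : lam ≠ 0) (hγ1 : γ - 1 ≠ 0) (hA0 : A ≠ 0)
    (hDne : (1 + v) ^ 2 - w ^ 2 ≠ 0) :
    -(1 / lam) * (x * -(t ^ 2)⁻¹) * v
      + -(1 / lam) * (x / t) *
        ((w ^ 2 * (v - 2 / (γ - 1) * (1 - lam)) - v * (1 + v) * (lam + v)) /
            (A * x * ((1 + v) ^ 2 - w ^ 2)) * (-1 / lam * (A / t) * x))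
      + -(1 / lam) * (x / t) * v *
        (-(1 / lam) / t * v
          + -(1 / lam) * (x / t) *
            ((w ^ 2 * (v - 2 / (γ - 1) * (1 - lam)) - v * (1 + v) * (lam + v)) /
              (A * x * ((1 + v) ^ 2 - w ^ 2)) * A))
      + 2 / (γ - 1) * (-(1 / lam) * (x / t) * w) *
        (-(1 / lam) / t * w
          + -(1 / lam) * (x / t) *
            (w * (w ^ 2 - (1 + v) ^ 2 + (1 / (2 / (γ - 1)) - 1) * (lam - 1) * (1 + v)
                - (lam - 1) / (2 / (γ - 1))) /
              (A * x * ((1 + v) ^ 2 - w ^ 2)) * A)) = 0 := by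
  field_simp
  ring

private theorem stmt0_aux2 (γ lam t x A v w : ℝ) (ht0 : t ≠ 0) (hx0 : x ≠ 0)
    (hlam : lam ≠ 0) (hγ1 : γ - 1 ≠ 0) (hA0 : A ≠ 0)
    (hDne : (1 + v) ^ 2 - w ^ 2 ≠ 0) :
    -(1 / lam) * (x * -(t ^ 2)⁻¹) * w
      + -(1 / lam) * (x / t) *
        (w * (w ^ 2 - (1 + v) ^ 2 + (1 / (2 / (γ - 1)) - 1) * (lam - 1) * (1 + v)
            - (lam - 1) / (2 / (γ - 1))) /
            (A * x * ((1 + v) ^ 2 - w ^ 2)) * (-1 / lam * (A / t) * x))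
      + -(1 / lam) * (x / t) * v *
        (-(1 / lam) / t * w
          + -(1 / lam) * (x / t) *
            (w * (w ^ 2 - (1 + v) ^ 2 + (1 / (2 / (γ - 1)) - 1) * (lam - 1) * (1 + v)
                - (lam - 1) / (2 / (γ - 1))) /
              (A * x * ((1 + v) ^ 2 - w ^ 2)) * A))
      + (2 / (γ - 1))⁻¹ * (-(1 / lam) * (x / t) * w) *
        (-(1 / lam) / t * v
          + -(1 / lam) * (x / t) *
            ((w ^ 2 * (v - 2 / (γ - 1) * (1 - lam)) - v * (1 + v) * (lam + v)) /
              (A * x * ((1 + v) ^ 2 - w ^ 2)) * A)) = 0 := by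
  field_simp
  ring

/-- Self-similar ansatz solves the isentropic Euler system in `(u,c)`-form. -/
theorem stmt_0 (γ lam : ℝ) (hγ : 1 < γ) (hlam : lam ≠ 0)
    (a b : ℝ) (I : Set ℝ) (hI : I = Set.Ioo a b) (hIpos : I ⊆ Set.Ioi 0)
    (V C : ℝ → ℝ)
    (hD : ∀ ξ ∈ I, Dfun (V ξ) (C ξ) ≠ 0)
    (hV : ∀ ξ ∈ I, HasDerivAt V (Gfun γ lam (V ξ) (C ξ) / (ξ * Dfun (V ξ) (C ξ))) ξ)
    (hC : ∀ ξ ∈ I, HasDerivAt C (Ffun γ lam (V ξ) (C ξ) / (ξ * Dfun (V ξ) (C ξ))) ξ)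
    (u c : ℝ → ℝ → ℝ)
    (hu : ∀ t x : ℝ, u t x = -(1 / lam) * (x / t) * V (t ^ (-1 / lam) * x))
    (hc : ∀ t x : ℝ, c t x = -(1 / lam) * (x / t) * C (t ^ (-1 / lam) * x)) :
    ∀ t : ℝ, 0 < t → ∀ x : ℝ, 0 < x → t ^ (-1 / lam) * x ∈ I →
      (deriv (fun s => u s x) t + u t x * deriv (fun y => u t y) x
          + ell γ * c t x * deriv (fun y => c t y) x = 0) ∧
      (deriv (fun s => c s x) t + u t x * deriv (fun y => c t y) x
          + (ell γ)⁻¹ * c t x * deriv (fun y => u t y) x = 0) := by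
  intro t ht x hx hmem
  have ht0 : t ≠ 0 := ht.ne'
  have hx0 : x ≠ 0 := hx.ne'
  have hξpos : (0 : ℝ) < t ^ (-1 / lam) * x := hIpos hmem
  have hξ0 : t ^ (-1 / lam) * x ≠ 0 := hξpos.ne'
  have hA0 : t ^ (-1 / lam) ≠ 0 := (Real.rpow_pos_of_pos ht _).ne'
  have hγ1 : γ - 1 ≠ 0 := sub_ne_zero.mpr hγ.ne'
  set v := V (t ^ (-1 / lam) * x) with hv
  set w := C (t ^ (-1 / lam) * x) with hw
  set vd := Gfun γ lam v w / ((t ^ (-1 / lam) * x) * Dfun v w) with hvd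
  set cd := Ffun γ lam v w / ((t ^ (-1 / lam) * x) * Dfun v w) with hcd
  have hDne : Dfun v w ≠ 0 := hD _ hmem
  have hVd : HasDerivAt V vd (t ^ (-1 / lam) * x) := hV _ hmem
  have hCd : HasDerivAt C cd (t ^ (-1 / lam) * x) := hC _ hmem
  -- inner function s ↦ s ^ (-1/lam) * x
  have hinner : HasDerivAt (fun s : ℝ => s ^ (-1 / lam) * x)
      ((-1 / lam) * t ^ (-1 / lam - 1) * x) t :=
    (Real.hasDerivAt_rpow_const (Or.inl ht0)).mul_const x
  -- time derivatives
  have hVt : HasDerivAt (fun s : ℝ => V (s ^ (-1 / lam) * x))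
      (vd * ((-1 / lam) * t ^ (-1 / lam - 1) * x)) t := hVd.comp t hinner
  have hCt : HasDerivAt (fun s : ℝ => C (s ^ (-1 / lam) * x))
      (cd * ((-1 / lam) * t ^ (-1 / lam - 1) * x)) t := hCd.comp t hinner
  have hpref : HasDerivAt (fun s : ℝ => -(1 / lam) * (x / s))
      (-(1 / lam) * (x * -(t ^ 2)⁻¹)) t := by
    have := ((hasDerivAt_inv ht0).const_mul x).const_mul (-(1 / lam))
    simpa [div_eq_mul_inv] using this
  have hut : HasDerivAt (fun s : ℝ => u s x)
      (-(1 / lam) * (x * -(t ^ 2)⁻¹) * v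
        + -(1 / lam) * (x / t) * (vd * ((-1 / lam) * t ^ (-1 / lam - 1) * x))) t := by
    have h := hpref.mul hVt
    have hfun : (fun s : ℝ => u s x)
        = fun s : ℝ => -(1 / lam) * (x / s) * V (s ^ (-1 / lam) * x) :=
      funext fun s => hu s x
    rw [hfun]; exact h
  have hct : HasDerivAt (fun s : ℝ => c s x)
      (-(1 / lam) * (x * -(t ^ 2)⁻¹) * w
        + -(1 / lam) * (x / t) * (cd * ((-1 / lam) * t ^ (-1 / lam - 1) * x))) t := by
    have h := hpref.mul hCt
    have hfun : (fun s : ℝ => c s x)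
        = fun s : ℝ => -(1 / lam) * (x / s) * C (s ^ (-1 / lam) * x) :=
      funext fun s => hc s x
    rw [hfun]; exact h
  -- space derivatives
  have hinx : HasDerivAt (fun y : ℝ => t ^ (-1 / lam) * y) (t ^ (-1 / lam)) x := by
    simpa using (hasDerivAt_id x).const_mul (t ^ (-1 / lam))
  have hVx : HasDerivAt (fun y : ℝ => V (t ^ (-1 / lam) * y))
      (vd * t ^ (-1 / lam)) x := hVd.comp x hinx
  have hCx : HasDerivAt (fun y : ℝ => C (t ^ (-1 / lam) * y))
      (cd * t ^ (-1 / lam)) x := hCd.comp x hinx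
  have hprefx : HasDerivAt (fun y : ℝ => -(1 / lam) * (y / t)) (-(1 / lam) / t) x := by
    simpa [mul_div_assoc, div_eq_mul_inv] using ((hasDerivAt_id x).div_const t).const_mul (-(1 / lam))
  have hux : HasDerivAt (fun y : ℝ => u t y)
      (-(1 / lam) / t * v + -(1 / lam) * (x / t) * (vd * t ^ (-1 / lam))) x := by
    have h := hprefx.mul hVx
    have hfun : (fun y : ℝ => u t y)
        = fun y : ℝ => -(1 / lam) * (y / t) * V (t ^ (-1 / lam) * y) :=
      funext fun y => hu t y
    rw [hfun]; exact h
  have hcx : HasDerivAt (fun y : ℝ => c t y)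
      (-(1 / lam) / t * w + -(1 / lam) * (x / t) * (cd * t ^ (-1 / lam))) x := by
    have h := hprefx.mul hCx
    have hfun : (fun y : ℝ => c t y)
        = fun y : ℝ => -(1 / lam) * (y / t) * C (t ^ (-1 / lam) * y) :=
      funext fun y => hc t y
    rw [hfun]; exact h
  rw [hut.deriv, hct.deriv, hux.deriv, hcx.deriv, hu t x, hc t x]
  have hpow : t ^ (-1 / lam - 1) = t ^ (-1 / lam) / t := by
    rw [Real.rpow_sub ht, Real.rpow_one]
  rw [hpow, hvd, hcd]
  set A := t ^ (-1 / lam) with hA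
  have hAx0 : A * x ≠ 0 := mul_ne_zero hA0 hx0
  unfold Gfun Ffun Dfun Vstar k1 k0 ell
  unfold Dfun at hDne
  rw [← hv, ← hw]
  constructor
  · linear_combination stmt0_aux1 γ lam t x A v w ht0 hx0 hlam hγ1 hA0 hDne
  · linear_combination stmt0_aux2 γ lam t x A v w ht0 hx0 hlam hγ1 hA0 hDne
end

section
/- Assume γ > 1, γ ≠ 3 (equivalently ℓ ≠ 1), and λ ∈ ℝ. Then with V₅ := ℓ/(1−ℓ) = 2/(γ−3) and C₅ := 1/|ℓ−1|, the points P₅ := (V₅, C₅) and P₆ := (V₅, −C₅) are critical points of the reduced similarity ODE: F(V₅, ±C₅) = 0 and G(V₅, ±C₅) = 0. Moreover C₅ = |1 + V₅|, so that P₅ and P₆ lie on the union of the critical lines L_± := {C = ±(1+V)}. -/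
/-! On the critical lines `C² = (1 + V)²` both `F` and `G` factor through the linear form
`(1 - ℓ) V - ℓ`, whose zero is `V₅ = ℓ / (1 - ℓ)`; and `1 + V₅ = 1 / (1 - ℓ)`, so
`C₅ = |1 + V₅|` puts `P₅` and `P₆` on those lines. -/

theorem ell_ne_zero {γ : ℝ} (hγ : 1 < γ) : ell γ ≠ 0 := by
  have : 0 < γ - 1 := by linarith
  unfold ell
  positivity

theorem ell_ne_one {γ : ℝ} (hγ3 : γ ≠ 3) : ell γ ≠ 1 := by
  intro h
  have hγ1 : γ - 1 ≠ 0 := by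
    intro h0
    simp [ell, h0] at h
  rw [ell, div_eq_one_iff_eq hγ1] at h
  exact hγ3 (by linarith)

theorem ell_div_one_sub_ell {γ : ℝ} (hγ : 1 < γ) (hγ3 : γ ≠ 3) :
    ell γ / (1 - ell γ) = 2 / (γ - 3) := by
  have hγ1 : γ - 1 ≠ 0 := by linarith
  have hγ3' : γ - 3 ≠ 0 := sub_ne_zero.2 hγ3
  rw [div_eq_div_iff (sub_ne_zero.2 (ell_ne_one hγ3).symm) hγ3', ell]
  field_simp
  ring

theorem one_add_div_one_sub {ℓ : ℝ} (hℓ : ℓ ≠ 1) : 1 + ℓ / (1 - ℓ) = 1 / (1 - ℓ) := by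
  have : 1 - ℓ ≠ 0 := sub_ne_zero.2 hℓ.symm
  field_simp
  ring

section CriticalLines

variable {γ lam V C : ℝ}

theorem Ffun_eq_of_sq_eq (hℓ : ell γ ≠ 0) (hC : C ^ 2 = (1 + V) ^ 2) :
    Ffun γ lam V C = C * (lam - 1) / ell γ * ((1 - ell γ) * V - ell γ) := by
  rw [Ffun, hC, k1, k0]
  field_simp
  ring

theorem Gfun_eq_of_sq_eq (hC : C ^ 2 = (1 + V) ^ 2) :
    Gfun γ lam V C = (1 + V) * (1 - lam) * ((1 - ell γ) * V - ell γ) := by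
  rw [Gfun, hC, Vstar]
  ring

theorem Ffun_eq_zero_and_Gfun_eq_zero (hℓ : ell γ ≠ 0) (hC : C ^ 2 = (1 + V) ^ 2)
    (hV : (1 - ell γ) * V = ell γ) : Ffun γ lam V C = 0 ∧ Gfun γ lam V C = 0 := by
  rw [Ffun_eq_of_sq_eq hℓ hC, Gfun_eq_of_sq_eq hC, hV, sub_self]
  exact ⟨mul_zero _, mul_zero _⟩

end CriticalLines

/-- for `γ ≠ 3` the points `P₅ = (V₅, C₅)` and `P₆ = (V₅, −C₅)` with
`V₅ = ℓ/(1−ℓ) = 2/(γ−3)`, `C₅ = 1/|ℓ−1|` are critical points, and they lie on the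
union of the critical lines `L_± = {C = ±(1+V)}`. -/
theorem stmt_5 (γ lam : ℝ) (hγ : 1 < γ) (hγ3 : γ ≠ 3) :
    let V5 : ℝ := ell γ / (1 - ell γ)
    let C5 : ℝ := 1 / |ell γ - 1|
    (ell γ ≠ 1) ∧ V5 = 2 / (γ - 3) ∧
    Ffun γ lam V5 C5 = 0 ∧ Gfun γ lam V5 C5 = 0 ∧
    Ffun γ lam V5 (-C5) = 0 ∧ Gfun γ lam V5 (-C5) = 0 ∧
    C5 = |1 + V5| := by
  intro V5 C5
  have hℓ0 := ell_ne_zero hγ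
  have hℓ1 := ell_ne_one hγ3
  have hV5 : (1 - ell γ) * V5 = ell γ := mul_div_cancel₀ _ (sub_ne_zero.2 hℓ1.symm)
  have hC5 : C5 = |1 + V5| := by
    rw [one_add_div_one_sub hℓ1, abs_div, abs_one, abs_sub_comm]
  have hsq : C5 ^ 2 = (1 + V5) ^ 2 := by rw [hC5, sq_abs]
  obtain ⟨hF, hG⟩ := Ffun_eq_zero_and_Gfun_eq_zero (lam := lam) hℓ0 hsq hV5
  obtain ⟨hF', hG'⟩ :=
    Ffun_eq_zero_and_Gfun_eq_zero (lam := lam) hℓ0 (by rw [neg_sq, hsq]) hV5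
  exact ⟨hℓ1, ell_div_one_sub_ell hγ hγ3, hF, hG, hF', hG', hC5⟩
end

section
/- Let γ > 1 and λ ∈ ℝ, and let V₃ := −λℓ/(ℓ+1), C₃ := |λ|/(ℓ+1). Denoting by F_V, F_C, G_V, G_C the first-order partial derivatives of F and G evaluated at the point (V₃, C₃), the Wronskian satisfies F_C·G_V − F_V·G_C = ℓ·C₃²·(λ−1)·((γ−3)λ + (γ+1)). In particular, if λ < 1, λ ≠ 0, and 1 < γ < 3, then F_C·G_V − F_V·G_C < 0, so (V₃,C₃) is a saddle point of the reduced similarity ODE. -/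
/-! The partial derivatives of `F` and `G` are explicit polynomials, so at `P₃` the Wronskian is
a rational function of `γ` and `λ` whose identity with the claimed product is pure algebra
(only `C₃²` enters, hence `C₃` may be either square root of `λ² / (ℓ + 1)²`). The sign follows
from `(γ - 3) λ + (γ + 1) = (γ - 3)(λ - 1) + 2 (γ - 1) > 0` for `λ < 1 < γ < 3`. -/

lemma hasDerivAt_cubic (a b c d x : ℝ) :
    HasDerivAt (fun t => a * t ^ 3 + b * t ^ 2 + c * t + d) (3 * a * x ^ 2 + 2 * b * x + c) x := by
  have h := ((((hasDerivAt_pow 3 x).const_mul a).add ((hasDerivAt_pow 2 x).const_mul b)).add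
    ((hasDerivAt_id x).const_mul c)).add_const d
  exact h.congr_deriv (by push_cast; ring)

section Wronskian

variable (γ lam : ℝ)

lemma hasDerivAt_Ffun_V (V C : ℝ) :
    HasDerivAt (fun V => Ffun γ lam V C) (C * (k1 γ lam - 2 * (1 + V))) V := by
  have hF : (fun V => Ffun γ lam V C) = fun V => 0 * V ^ 3 + (-C) * V ^ 2 +
      C * (k1 γ lam - 2) * V + C * (C ^ 2 - 1 + k1 γ lam - k0 γ lam) := by
    ext V; simp only [Ffun]; ring
  rw [hF]
  exact (hasDerivAt_cubic _ _ _ _ V).congr_deriv (by ring)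

lemma hasDerivAt_Ffun_C (V C : ℝ) :
    HasDerivAt (fun C => Ffun γ lam V C)
      (3 * C ^ 2 - (1 + V) ^ 2 + k1 γ lam * (1 + V) - k0 γ lam) C := by
  have hF : (fun C => Ffun γ lam V C) = fun C => 1 * C ^ 3 + 0 * C ^ 2 +
      (-(1 + V) ^ 2 + k1 γ lam * (1 + V) - k0 γ lam) * C + 0 := by
    ext C; simp only [Ffun]; ring
  rw [hF]
  exact (hasDerivAt_cubic _ _ _ _ C).congr_deriv (by ring)

lemma hasDerivAt_Gfun_V (V C : ℝ) :
    HasDerivAt (fun V => Gfun γ lam V C) (C ^ 2 - lam - 2 * (1 + lam) * V - 3 * V ^ 2) V := by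
  have hG : (fun V => Gfun γ lam V C) = fun V => (-1) * V ^ 3 + (-(1 + lam)) * V ^ 2 +
      (C ^ 2 - lam) * V + (-C ^ 2 * Vstar γ lam) := by
    ext V; simp only [Gfun]; ring
  rw [hG]
  exact (hasDerivAt_cubic _ _ _ _ V).congr_deriv (by ring)

lemma hasDerivAt_Gfun_C (V C : ℝ) :
    HasDerivAt (fun C => Gfun γ lam V C) (2 * C * (V - Vstar γ lam)) C := by
  have hG : (fun C => Gfun γ lam V C) = fun C => 0 * C ^ 3 + (V - Vstar γ lam) * C ^ 2 +
      0 * C + (-(V * (1 + V) * (lam + V))) := by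
    ext C; simp only [Gfun]; ring
  rw [hG]
  exact (hasDerivAt_cubic _ _ _ _ C).congr_deriv (by ring)

noncomputable def wronskian (V C : ℝ) : ℝ :=
  deriv (fun C => Ffun γ lam V C) C * deriv (fun V => Gfun γ lam V C) V -
    deriv (fun V => Ffun γ lam V C) V * deriv (fun C => Gfun γ lam V C) C

lemma wronskian_eq (V C : ℝ) :
    wronskian γ lam V C =
      (3 * C ^ 2 - (1 + V) ^ 2 + k1 γ lam * (1 + V) - k0 γ lam) *
          (C ^ 2 - lam - 2 * (1 + lam) * V - 3 * V ^ 2) -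
        2 * C ^ 2 * (k1 γ lam - 2 * (1 + V)) * (V - Vstar γ lam) := by
  rw [wronskian, (hasDerivAt_Ffun_V γ lam V C).deriv, (hasDerivAt_Ffun_C γ lam V C).deriv,
    (hasDerivAt_Gfun_V γ lam V C).deriv, (hasDerivAt_Gfun_C γ lam V C).deriv]
  ring

lemma ell_add_one {γ : ℝ} (hγ : γ ≠ 1) : ell γ + 1 = (γ + 1) / (γ - 1) := by
  rw [ell]; field_simp [sub_ne_zero.mpr hγ]; ring

lemma wronskian_P3 {γ : ℝ} (hγ : γ ≠ 1) (hγ' : γ ≠ -1) {C : ℝ}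
    (hC : C ^ 2 = (lam / (ell γ + 1)) ^ 2) :
    wronskian γ lam (-lam * ell γ / (ell γ + 1)) C =
      ell γ * C ^ 2 * (lam - 1) * ((γ - 3) * lam + (γ + 1)) := by
  have h₁ : γ - 1 ≠ 0 := sub_ne_zero.mpr hγ
  have h₂ : γ + 1 ≠ 0 := by contrapose! hγ'; linarith
  rw [wronskian_eq, hC, ell_add_one hγ]
  simp only [k1, k0, Vstar, ell]
  field_simp
  ring

end Wronskian

/-- the Wronskian of the linearization at `P₃` equals
`ℓ C₃² (λ−1)((γ−3)λ+(γ+1))`; in particular it is negative when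
`λ < 1`, `λ ≠ 0` and `1 < γ < 3`, so `P₃` is a saddle point. -/
theorem stmt_8 (γ lam : ℝ) (hγ : 1 < γ) :
    let V3 : ℝ := -lam * ell γ / (ell γ + 1)
    let C3 : ℝ := |lam| / (ell γ + 1)
    let FV : ℝ := deriv (fun V => Ffun γ lam V C3) V3
    let FC : ℝ := deriv (fun C => Ffun γ lam V3 C) C3
    let GV : ℝ := deriv (fun V => Gfun γ lam V C3) V3
    let GC : ℝ := deriv (fun C => Gfun γ lam V3 C) C3
    FC * GV - FV * GC = ell γ * C3 ^ 2 * (lam - 1) * ((γ - 3) * lam + (γ + 1)) ∧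
    (lam < 1 → lam ≠ 0 → γ < 3 → FC * GV - FV * GC < 0) := by
  intro V3 C3 FV FC GV GC
  have hW : FC * GV - FV * GC = ell γ * C3 ^ 2 * (lam - 1) * ((γ - 3) * lam + (γ + 1)) :=
    wronskian_P3 lam hγ.ne' (by linarith) (by rw [div_pow, div_pow, sq_abs])
  refine ⟨hW, fun hlam hlam0 hγ3 => ?_⟩
  have hell : 0 < ell γ := div_pos two_pos (by linarith)
  have hC3 : 0 < C3 ^ 2 := pow_pos (div_pos (abs_pos.mpr hlam0) (by linarith)) 2
  have hfactor : 0 < (γ - 3) * lam + (γ + 1) := by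
    nlinarith [mul_pos_of_neg_of_neg (sub_neg.mpr hγ3) (sub_neg.mpr hlam)]
  rw [hW]
  exact mul_neg_of_neg_of_pos (mul_neg_of_pos_of_neg (mul_pos hell hC3) (by linarith)) hfactor
end

section
/- Assume 0 < λ < 1 and 1 < γ < 3. Let P₅ := (V₅, C₅) with V₅ := 2/(γ−3) and C₅ := (γ−1)/(3−γ), and let F_V, F_C, G_V, G_C denote the first-order partial derivatives of F and G evaluated at P₅. Then F_C > 0, F_V > 0, G_C < 0, G_V < 0, and the following chain of inequalities holds: −F_V/F_C < −1 < −G_V/G_C < −ℓ^{−1}. -/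
/-!
With `c := C₅ = (γ - 1)/(3 - γ) > 0` one has `V₅ = -1 - c` and `ℓ = (1 + c)/c`, so `P₅` lies on
the line `1 + V = -C` and the coefficients become `k1 = (1 - λ)/(1 + c)`, `k0 = -c k1`. Then
`F_C = 2c²`, `F_V - F_C = c k1 > 0`, `G_C = -2(1 + c)(1 + c - λ)`, `G_V - G_C = 1 - λ` and
`G_C/ℓ - G_V = 1 + 2c - λ`, and all the claimed signs and slope comparisons can be read off.
-/

section PartialDerivatives

variable (γ lam V C : ℝ)

lemma deriv_Ffun_V : deriv (fun V => Ffun γ lam V C) V = C * (k1 γ lam - 2 * (1 + V)) := by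
  have h1 : HasDerivAt (fun V : ℝ => 1 + V) 1 V := (hasDerivAt_id' V).const_add 1
  have h := ((((h1.fun_pow 2).const_sub (C ^ 2)).fun_add (h1.const_mul (k1 γ lam))).sub_const
    (k0 γ lam)).const_mul C
  simp only [Ffun]
  rw [h.deriv]
  ring

lemma deriv_Ffun_C :
    deriv (fun C => Ffun γ lam V C) C = 3 * C ^ 2 - (1 + V) ^ 2 + k1 γ lam * (1 + V) - k0 γ lam := by
  have h := (hasDerivAt_id' C).fun_mul ((((hasDerivAt_pow 2 C).sub_const ((1 + V) ^ 2)).add_const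
    (k1 γ lam * (1 + V))).sub_const (k0 γ lam))
  simp only [Ffun]
  rw [h.deriv]
  ring

lemma deriv_Gfun_V :
    deriv (fun V => Gfun γ lam V C) V = C ^ 2 - (3 * V ^ 2 + 2 * (1 + lam) * V + lam) := by
  have h := (((hasDerivAt_id' V).sub_const (Vstar γ lam)).const_mul (C ^ 2)).fun_sub
    (((hasDerivAt_id' V).fun_mul ((hasDerivAt_id' V).const_add 1)).fun_mul
      ((hasDerivAt_id' V).const_add lam))
  simp only [Gfun]
  rw [h.deriv]
  ring

lemma deriv_Gfun_C : deriv (fun C => Gfun γ lam V C) C = 2 * C * (V - Vstar γ lam) := by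
  have h := ((hasDerivAt_pow 2 C).mul_const (V - Vstar γ lam)).sub_const (V * (1 + V) * (lam + V))
  simp only [Gfun]
  rw [h.deriv]
  ring

end PartialDerivatives

section AtP5

variable {γ lam c : ℝ}

lemma k1_eq_of_ell_eq (hc : 0 < c) (hℓ : ell γ = (1 + c) / c) :
    k1 γ lam = (1 - lam) / (1 + c) := by
  unfold k1
  rw [hℓ]
  field_simp
  ring

lemma k0_eq_of_ell_eq (hc : 0 < c) (hℓ : ell γ = (1 + c) / c) :
    k0 γ lam = -(c * k1 γ lam) := by
  rw [k1_eq_of_ell_eq hc hℓ]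
  unfold k0
  rw [hℓ]
  field_simp
  ring

lemma Vstar_eq_of_ell_eq (hℓ : ell γ = (1 + c) / c) :
    Vstar γ lam = (1 - lam) * (1 + c) / c := by
  unfold Vstar
  rw [hℓ]
  ring

lemma deriv_Ffun_C_at_P5 (hc : 0 < c) (hℓ : ell γ = (1 + c) / c) :
    deriv (fun C => Ffun γ lam (-1 - c) C) c = 2 * c ^ 2 := by
  rw [deriv_Ffun_C, k0_eq_of_ell_eq hc hℓ]
  ring

lemma deriv_Ffun_V_at_P5 :
    deriv (fun V => Ffun γ lam V c) (-1 - c) = c * (k1 γ lam + 2 * c) := by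
  rw [deriv_Ffun_V]
  ring

lemma deriv_Gfun_C_at_P5 (hc : 0 < c) (hℓ : ell γ = (1 + c) / c) :
    deriv (fun C => Gfun γ lam (-1 - c) C) c = -2 * (1 + c) * (1 + c - lam) := by
  rw [deriv_Gfun_C, Vstar_eq_of_ell_eq hℓ]
  field_simp
  ring

lemma deriv_Gfun_V_at_P5 :
    deriv (fun V => Gfun γ lam V c) (-1 - c) = -((1 + 2 * c) * (1 + c - lam) + c) := by
  rw [deriv_Gfun_V]
  ring

lemma slopes_at_P5 (hc : 0 < c) (hℓ : ell γ = (1 + c) / c) (hlam0 : 0 < lam) (hlam1 : lam < 1) :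
    let FV := deriv (fun V => Ffun γ lam V c) (-1 - c)
    let FC := deriv (fun C => Ffun γ lam (-1 - c) C) c
    let GV := deriv (fun V => Gfun γ lam V c) (-1 - c)
    let GC := deriv (fun C => Gfun γ lam (-1 - c) C) c
    0 < FC ∧ 0 < FV ∧ GC < 0 ∧ GV < 0 ∧
    -FV / FC < -1 ∧ -1 < -GV / GC ∧ -GV / GC < -(ell γ)⁻¹ := by
  intro FV FC GV GC
  have hk1 : 0 < k1 γ lam := by
    rw [k1_eq_of_ell_eq hc hℓ]
    exact div_pos (by linarith) (by linarith)
  have hFC : FC = 2 * c ^ 2 := deriv_Ffun_C_at_P5 hc hℓ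
  have hFV : FV = c * (k1 γ lam + 2 * c) := deriv_Ffun_V_at_P5
  have hGC : GC = -2 * (1 + c) * (1 + c - lam) := deriv_Gfun_C_at_P5 hc hℓ
  have hGV : GV = -((1 + 2 * c) * (1 + c - lam) + c) := deriv_Gfun_V_at_P5
  have hFC_pos : 0 < FC := by rw [hFC]; positivity
  have hGC_neg : GC < 0 := by rw [hGC]; nlinarith
  refine ⟨hFC_pos, ?_, hGC_neg, ?_, ?_, ?_, ?_⟩
  · rw [hFV]
    exact mul_pos hc (by linarith)
  · rw [hGV]
    nlinarith
  · rw [neg_div, neg_lt_neg_iff, one_lt_div hFC_pos, hFV, hFC]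
    nlinarith [mul_pos hc hk1]
  · rw [neg_div, neg_lt_neg_iff, div_lt_one_of_neg hGC_neg, hGV, hGC]
    nlinarith
  · rw [neg_div, neg_lt_neg_iff, lt_div_iff_of_neg hGC_neg, hℓ, inv_div, hGV, hGC]
    have hscaled : c / (1 + c) * (-2 * (1 + c) * (1 + c - lam)) = -2 * c * (1 + c - lam) := by
      field_simp
    rw [hscaled]
    nlinarith

end AtP5

/-- signs and slope inequalities for the partial derivatives of `F`
and `G` at `P₅` when `0 < λ < 1` and `1 < γ < 3`. -/
theorem stmt_9 (γ lam : ℝ) (hγ1 : 1 < γ) (hγ3 : γ < 3)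
    (hlam0 : 0 < lam) (hlam1 : lam < 1) :
    let V5 : ℝ := 2 / (γ - 3)
    let C5 : ℝ := (γ - 1) / (3 - γ)
    let FV : ℝ := deriv (fun V => Ffun γ lam V C5) V5
    let FC : ℝ := deriv (fun C => Ffun γ lam V5 C) C5
    let GV : ℝ := deriv (fun V => Gfun γ lam V C5) V5
    let GC : ℝ := deriv (fun C => Gfun γ lam V5 C) C5
    0 < FC ∧ 0 < FV ∧ GC < 0 ∧ GV < 0 ∧
    -FV / FC < -1 ∧ -1 < -GV / GC ∧ -GV / GC < -(ell γ)⁻¹ := by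
  intro V5 C5
  have h3γ : (3 : ℝ) - γ ≠ 0 := by linarith
  have hγ1' : γ - 1 ≠ 0 := by linarith
  have hc : 0 < C5 := div_pos (by linarith) (by linarith)
  have hV5 : V5 = -1 - C5 := by
    simp only [V5, C5]
    rw [show γ - 3 = -(3 - γ) by ring]
    field_simp
    ring
  have hℓ : ell γ = (1 + C5) / C5 := by
    simp only [ell, C5]
    field_simp
    ring
  rw [hV5]
  exact slopes_at_P5 hc hℓ hlam0 hlam1
end

section
/- Assume 0 < λ < 1 and γ > 3. Let P₆ := (V₆, C₆) with V₆ := 2/(γ−3) and C₆ := (γ−1)/(3−γ) (so C₆ < 0), and let F_V, F_C, G_V, G_C denote the first-order partial derivatives of F and G evaluated at P₆. Then F_C > 0, F_V > 0, G_C < 0, and the following chain of inequalities holds: −ℓ^{−1} < −F_V/F_C < −1 < −G_V/G_C. -/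
section PartialDerivatives

variable (γ lam V C : ℝ)

theorem hasDerivAt_Ffun_fst :
    HasDerivAt (fun V => Ffun γ lam V C) (C * (k1 γ lam - 2 * (1 + V))) V := by
  have hV : HasDerivAt (fun V : ℝ => 1 + V) 1 V := (hasDerivAt_id' V).const_add 1
  exact ((((hV.fun_pow 2).const_sub (C ^ 2)).fun_add (hV.const_mul (k1 γ lam))).sub_const
    (k0 γ lam)).const_mul C |>.congr_deriv (by push_cast; ring)

theorem hasDerivAt_Ffun_snd :
    HasDerivAt (fun C => Ffun γ lam V C)
      (3 * C ^ 2 - (1 + V) ^ 2 + k1 γ lam * (1 + V) - k0 γ lam) C :=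
  (hasDerivAt_id' C).fun_mul (((((hasDerivAt_id' C).fun_pow 2).sub_const ((1 + V) ^ 2)).add_const
    (k1 γ lam * (1 + V))).sub_const (k0 γ lam)) |>.congr_deriv (by push_cast; ring)

theorem hasDerivAt_Gfun_fst :
    HasDerivAt (fun V => Gfun γ lam V C) (C ^ 2 - lam - 2 * (1 + lam) * V - 3 * V ^ 2) V :=
  (((hasDerivAt_id' V).sub_const (Vstar γ lam)).const_mul (C ^ 2)).fun_sub
    (((hasDerivAt_id' V).fun_mul ((hasDerivAt_id' V).const_add 1)).fun_mul
      ((hasDerivAt_id' V).const_add lam)) |>.congr_deriv (by ring)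

theorem hasDerivAt_Gfun_snd :
    HasDerivAt (fun C => Gfun γ lam V C) (2 * C * (V - Vstar γ lam)) C :=
  (((hasDerivAt_id' C).fun_pow 2).mul_const (V - Vstar γ lam)).sub_const
    (V * (1 + V) * (lam + V)) |>.congr_deriv (by push_cast; ring)

end PartialDerivatives

section SonicPoint

variable {γ lam V C : ℝ}

theorem inv_ell_sub_one_mul (hℓ : ell γ ≠ 0) (hV : V = ell γ * (1 + V)) :
    ((ell γ)⁻¹ - 1) * (1 + V) = (ell γ)⁻¹ := by
  calc ((ell γ)⁻¹ - 1) * (1 + V) = (ell γ)⁻¹ * (1 + V - ell γ * (1 + V)) := by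
        field_simp
    _ = (ell γ)⁻¹ := by rw [← hV]; ring

theorem k1_mul_one_add (hℓ : ell γ ≠ 0) (hV : V = ell γ * (1 + V)) :
    k1 γ lam * (1 + V) = (lam - 1) * (ell γ)⁻¹ := by
  rw [k1, one_div]
  linear_combination (lam - 1) * inv_ell_sub_one_mul hℓ hV

theorem deriv_Ffun_snd_of_sonic (hℓ : ell γ ≠ 0) (hV : V = ell γ * (1 + V))
    (hC : C = -(1 + V)) : deriv (fun C => Ffun γ lam V C) C = 2 * (1 + V) ^ 2 := by
  rw [(hasDerivAt_Ffun_snd γ lam V C).deriv, k1_mul_one_add hℓ hV, k0, hC, div_eq_mul_inv]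
  ring

theorem deriv_Ffun_fst_of_sonic (hℓ : ell γ ≠ 0) (hV : V = ell γ * (1 + V))
    (hC : C = -(1 + V)) :
    deriv (fun V => Ffun γ lam V C) V = 2 * (1 + V) ^ 2 + (1 - lam) * (ell γ)⁻¹ := by
  rw [(hasDerivAt_Ffun_fst γ lam V C).deriv, hC]
  linear_combination (-1 : ℝ) * k1_mul_one_add (lam := lam) hℓ hV

theorem deriv_Ffun_fst_lt_inv_ell_mul_snd_of_sonic (hℓ : 0 < ell γ)
    (hV : V = ell γ * (1 + V)) (hC : C = -(1 + V)) (hV0 : 0 < V) (hlam : 0 < lam) :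
    deriv (fun V => Ffun γ lam V C) V < (ell γ)⁻¹ * deriv (fun C => Ffun γ lam V C) C := by
  rw [deriv_Ffun_fst_of_sonic hℓ.ne' hV hC, deriv_Ffun_snd_of_sonic hℓ.ne' hV hC]
  calc 2 * (1 + V) ^ 2 + (1 - lam) * (ell γ)⁻¹
      < 2 * (1 + V) ^ 2 + 2 * (1 + V) * (ell γ)⁻¹ := by gcongr; linarith
    _ = (ell γ)⁻¹ * (2 * (1 + V) ^ 2) := by
      linear_combination (-2 * (1 + V)) * inv_ell_sub_one_mul hℓ.ne' hV

theorem deriv_Gfun_snd_neg_of_sonic (hℓ : 0 < ell γ) (hV : V = ell γ * (1 + V))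
    (hC : C = -(1 + V)) (hV0 : 0 < V) (hlam : 0 < lam) :
    deriv (fun C => Gfun γ lam V C) C < 0 := by
  rw [(hasDerivAt_Gfun_snd γ lam V C).deriv]
  refine mul_neg_of_neg_of_pos (by linarith) (sub_pos.2 ?_)
  rw [Vstar, hV]
  exact mul_lt_mul_of_pos_left (by linarith) hℓ

theorem deriv_Gfun_fst_sub_snd_of_sonic (hV : V = ell γ * (1 + V)) (hC : C = -(1 + V)) :
    deriv (fun V => Gfun γ lam V C) V - deriv (fun C => Gfun γ lam V C) C = 1 - lam := by
  rw [(hasDerivAt_Gfun_fst γ lam V C).deriv, (hasDerivAt_Gfun_snd γ lam V C).deriv, Vstar, hC]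
  linear_combination 2 * (1 - lam) * hV

end SonicPoint

section PointSix

variable {γ : ℝ}

theorem two_div_sub_three_eq_ell_mul (hγ : 3 < γ) :
    2 / (γ - 3) = ell γ * (1 + 2 / (γ - 3)) := by
  have : γ - 1 ≠ 0 := by linarith
  have : γ - 3 ≠ 0 := by linarith
  rw [ell]; field_simp; ring

theorem div_three_sub_eq_neg_one_add (hγ : 3 < γ) :
    (γ - 1) / (3 - γ) = -(1 + 2 / (γ - 3)) := by
  have : 3 - γ ≠ 0 := by linarith
  have : γ - 3 ≠ 0 := by linarith
  field_simp; ring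

end PointSix

/-- signs and slope inequalities for the partial derivatives of `F`
and `G` at `P₆` when `0 < λ < 1` and `γ > 3`. -/
theorem stmt_11 (γ lam : ℝ) (hγ : 3 < γ) (hlam0 : 0 < lam) (hlam1 : lam < 1) :
    let V6 : ℝ := 2 / (γ - 3)
    let C6 : ℝ := (γ - 1) / (3 - γ)
    let FV : ℝ := deriv (fun V => Ffun γ lam V C6) V6
    let FC : ℝ := deriv (fun C => Ffun γ lam V6 C) C6
    let GV : ℝ := deriv (fun V => Gfun γ lam V C6) V6
    let GC : ℝ := deriv (fun C => Gfun γ lam V6 C) C6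
    C6 < 0 ∧ 0 < FC ∧ 0 < FV ∧ GC < 0 ∧
    -(ell γ)⁻¹ < -FV / FC ∧ -FV / FC < -1 ∧ -1 < -GV / GC := by
  intro V6 C6 FV FC GV GC
  have hℓ : 0 < ell γ := div_pos two_pos (by linarith)
  have hV6 : 0 < V6 := div_pos two_pos (by linarith)
  have hV := two_div_sub_three_eq_ell_mul hγ
  have hC := div_three_sub_eq_neg_one_add hγ
  have hFC : FC = 2 * (1 + V6) ^ 2 := deriv_Ffun_snd_of_sonic hℓ.ne' hV hC
  have hFC0 : 0 < FC := by rw [hFC]; positivity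
  have hFV : FV = FC + (1 - lam) * (ell γ)⁻¹ := by
    rw [hFC]; exact deriv_Ffun_fst_of_sonic hℓ.ne' hV hC
  have hFC_lt_FV : FC < FV := by
    rw [hFV]; exact lt_add_of_pos_right _ (mul_pos (by linarith) (inv_pos.2 hℓ))
  have hGC : GC < 0 := deriv_Gfun_snd_neg_of_sonic hℓ hV hC hV6 hlam0
  have hGC_lt_GV : GC < GV := by
    linarith [deriv_Gfun_fst_sub_snd_of_sonic (lam := lam) hV hC]
  refine ⟨by linarith, hFC0, by linarith, hGC, ?_, ?_, ?_⟩
  · rw [neg_div, neg_lt_neg_iff, div_lt_iff₀ hFC0]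
    exact deriv_Ffun_fst_lt_inv_ell_mul_snd_of_sonic hℓ hV hC hV6 hlam0
  · rwa [neg_div, neg_lt_neg_iff, one_lt_div hFC0]
  · rwa [neg_div, ← div_neg, lt_div_iff₀ (neg_pos.2 hGC), neg_one_mul, neg_neg]
end

section
/- Let γ > 1 and ℓ := 2/(γ−1). Define f : (0,∞) → ℝ by f(z) := z^{2(ℓ+1)} − (1 + 1/γ)·z^{ℓ+2} + 1/γ. Then f(z) > 0 as z → 0⁺ (indeed f tends to 1/γ > 0), f′(z) = 2(ℓ+1)·z^{ℓ+1}·(z^ℓ − 1), and z = 1 is the unique zero of f on (0,∞): for every z > 0, f(z) = 0 if and only if z = 1. -/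
/-- properties of `f(z) = z^{2(ℓ+1)} − (1+1/γ) z^{ℓ+2} + 1/γ`
with `ℓ = 2/(γ−1)`: it tends to `1/γ > 0` as `z → 0⁺`, its derivative is
`2(ℓ+1) z^{ℓ+1} (z^ℓ − 1)`, and `z = 1` is its unique zero on `(0,∞)`. -/
theorem stmt_18 (γ : ℝ) (hγ : 1 < γ) :
    let l : ℝ := 2 / (γ - 1)
    let f : ℝ → ℝ := fun z => z ^ (2 * (l + 1)) - (1 + 1 / γ) * z ^ (l + 2) + 1 / γ
    Filter.Tendsto f (nhdsWithin 0 (Set.Ioi 0)) (nhds (1 / γ)) ∧ 0 < 1 / γ ∧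
    (∀ z : ℝ, 0 < z → deriv f z = 2 * (l + 1) * z ^ (l + 1) * (z ^ l - 1)) ∧
    (∀ z : ℝ, 0 < z → (f z = 0 ↔ z = 1)) := by
  intro l f
  have hγ0 : (0:ℝ) < γ := by linarith
  have hγ1 : (0:ℝ) < γ - 1 := by linarith
  have hlval : l = 2 / (γ - 1) := rfl
  have hl : 0 < l := by rw [hlval]; positivity
  refine ⟨?_, by positivity, ?_, ?_⟩
  · -- tendsto
    have h1 : ContinuousAt (fun z : ℝ => z ^ (2 * (l + 1))) 0 :=
      Real.continuousAt_rpow_const 0 _ (Or.inr (by linarith))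
    have h2 : ContinuousAt (fun z : ℝ => z ^ (l + 2)) 0 :=
      Real.continuousAt_rpow_const 0 _ (Or.inr (by linarith))
    have hc : ContinuousAt f 0 :=
      ((h1.sub (continuousAt_const.mul h2)).add continuousAt_const)
    have := hc.continuousWithinAt (s := Set.Ioi 0)
    have hf0 : f 0 = 1 / γ := by
      show (0:ℝ) ^ (2 * (l + 1)) - (1 + 1 / γ) * (0:ℝ) ^ (l + 2) + 1 / γ = 1 / γ
      rw [Real.zero_rpow (by linarith), Real.zero_rpow (by linarith)]
      ring
    rw [ContinuousWithinAt, hf0] at this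
    exact this
  · -- derivative
    intro z hz
    have hz0 : z ≠ 0 := ne_of_gt hz
    have d1 : HasDerivAt (fun z : ℝ => z ^ (2 * (l + 1)))
        (2 * (l + 1) * z ^ (2 * (l + 1) - 1)) z :=
      Real.hasDerivAt_rpow_const (Or.inl hz0)
    have d2 : HasDerivAt (fun z : ℝ => z ^ (l + 2)) ((l + 2) * z ^ (l + 2 - 1)) z :=
      Real.hasDerivAt_rpow_const (Or.inl hz0)
    have df : HasDerivAt f
        (2 * (l + 1) * z ^ (2 * (l + 1) - 1) - (1 + 1 / γ) * ((l + 2) * z ^ (l + 2 - 1))) z :=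
      (d1.sub (d2.const_mul _)).add_const _
    rw [df.deriv]
    have key : (1 + 1 / γ) * (l + 2) = 2 * (l + 1) := by
      rw [hlval]; field_simp; ring
    rw [show 2 * (l + 1) - 1 = (l + 1) + l by ring, show l + 2 - 1 = l + 1 by ring,
      Real.rpow_add hz]
    nlinarith [key, Real.rpow_pos_of_pos hz (l+1)]
  · -- unique zero
    intro z hz
    constructor
    · intro hfz
      by_contra hz1
      have hzle : (0:ℝ) ≤ z := hz.le
      set p : ℝ := (γ + 1) / γ with hp
      have hp1 : 1 < p := (one_lt_div hγ0).mpr (by linarith)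
      set x : ℝ := z ^ (l + 2) - 1 with hx
      have hx1 : -1 ≤ x := by
        have := Real.rpow_nonneg hzle (l + 2)
        simp only [hx]; linarith
      have hne : l + 2 ≠ 0 := by linarith
      have hx0 : x ≠ 0 := by
        intro h
        have hzpow : z ^ (l + 2) = 1 := by
          have : x + 1 = z ^ (l+2) := by rw [hx]; ring
          linarith [h ▸ this.symm]
        apply hz1
        have : z = (z ^ (l + 2)) ^ (l + 2)⁻¹ := by
          rw [← Real.rpow_mul hzle, mul_inv_cancel₀ hne, Real.rpow_one]
        rw [this, hzpow, Real.one_rpow]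
      have hbern := one_add_mul_self_lt_rpow_one_add hx1 hx0 hp1
      have h1x : 1 + x = z ^ (l + 2) := by rw [hx]; ring
      have hexp : (l + 2) * p = 2 * (l + 1) := by
        rw [hp, hlval]; field_simp; ring
      have hpow : (1 + x) ^ p = z ^ (2 * (l + 1)) := by
        rw [h1x, ← Real.rpow_mul hzle, hexp]
      rw [hpow] at hbern
      have hpval : p = 1 + 1 / γ := by rw [hp]; field_simp
      have hfz' : z ^ (2 * (l + 1)) - (1 + 1 / γ) * z ^ (l + 2) + 1 / γ = 0 := hfz
      rw [← h1x, ← hpval] at hfz'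
      nlinarith [hbern, hfz', hpval]
    · intro h
      subst h
      show (1:ℝ) ^ (2 * (l + 1)) - (1 + 1 / γ) * (1:ℝ) ^ (l + 2) + 1 / γ = 0
      rw [Real.one_rpow, Real.one_rpow]; ring
end

section
/- Let γ > 1, ℓ := 2/(γ−1), and let k ∈ ℝ with k ≠ 0 and k² ≠ 1. Define g : (0,∞) → ℝ by g(w) := (1/k²)·w^{2(ℓ+1)} − (1/k² + 1/γ)·w^{ℓ+2} + 1/γ. Then: (i) g(1) = 0 and g(w) → +∞ as w → +∞; (ii) g attains its global minimum on (0,∞) uniquely at w̄ := ((γ + k²)/(γ + 1))^{1/ℓ}, and w̄ > 1 if k² > 1 while w̄ < 1 if k² < 1; (iii) g has exactly one zero w_k in (0,∞) different from 1, and w_k > 1 if k² > 1 while w_k < 1 if k² < 1. -/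
/-!
`g` has the shape `A w^p - B w^q + C` with `A, C > 0` and `0 < q < p`. Its derivative
`w^(q-1) (A p w^(p-q) - B q)` changes sign exactly once, at `w̄`, so `g` decreases strictly on
`[0, w̄]` and increases strictly on `[w̄, ∞)`. Two distinct points of a level set of such a
function lie on opposite sides of `w̄`, so a level set has at most two points, and
`g w̄ < g 1 = 0`. As `g 0 = C > 0` and `g → ∞`, the intermediate value theorem produces a second
zero, on the other side of `w̄` from `1`.
-/

open Set Filter

section Valley

variable {f : ℝ → ℝ} {m : ℝ}

theorem apply_lt_apply_of_strictAntiOn_of_strictMonoOn (hanti : StrictAntiOn f (Icc 0 m))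
    (hmono : StrictMonoOn f (Ici m)) {w : ℝ} (hw : 0 ≤ w) (hwm : w ≠ m) : f m < f w := by
  rcases hwm.lt_or_gt with hlt | hgt
  · exact hanti ⟨hw, hlt.le⟩ ⟨hw.trans hlt.le, le_rfl⟩ hlt
  · exact hmono self_mem_Ici hgt.le hgt

theorem lt_and_lt_of_apply_eq (hanti : StrictAntiOn f (Icc 0 m))
    (hmono : StrictMonoOn f (Ici m)) {a b : ℝ} (ha : 0 ≤ a) (hab : a < b) (hf : f a = f b) :
    a < m ∧ m < b := by
  constructor
  · by_contra! hma
    exact (hmono hma (hma.trans hab.le) hab).ne hf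
  · by_contra! hbm
    exact (hanti ⟨ha, hab.le.trans hbm⟩ ⟨ha.trans hab.le, hbm⟩ hab).ne' hf

theorem sub_mul_sub_neg_of_apply_eq (hanti : StrictAntiOn f (Icc 0 m))
    (hmono : StrictMonoOn f (Ici m)) {a b : ℝ} (ha : 0 ≤ a) (hb : 0 ≤ b) (hab : a ≠ b)
    (hf : f a = f b) : (a - m) * (b - m) < 0 := by
  rcases hab.lt_or_gt with hlt | hgt
  · obtain ⟨ham, hmb⟩ := lt_and_lt_of_apply_eq hanti hmono ha hlt hf
    exact mul_neg_of_neg_of_pos (sub_neg.2 ham) (sub_pos.2 hmb)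
  · obtain ⟨hbm, hma⟩ := lt_and_lt_of_apply_eq hanti hmono hb hgt hf.symm
    exact mul_neg_of_pos_of_neg (sub_pos.2 hma) (sub_neg.2 hbm)

theorem exists_ne_apply_eq (hcont : ContinuousOn f (Ici 0)) (hanti : StrictAntiOn f (Icc 0 m))
    (hmono : StrictMonoOn f (Ici m)) (htop : Tendsto f atTop atTop) {a : ℝ} (ha : 0 ≤ a)
    (ham : a ≠ m) (h0 : f a < f 0) : ∃ b, 0 < b ∧ b ≠ a ∧ f b = f a := by
  have hma : f m < f a := apply_lt_apply_of_strictAntiOn_of_strictMonoOn hanti hmono ha ham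
  rcases ham.lt_or_gt with ham | hma'
  · obtain ⟨M, hMa, hmM⟩ := ((htop.eventually_gt_atTop (f a)).and (eventually_gt_atTop m)).exists
    obtain ⟨b, hb, hfb⟩ := intermediate_value_Icc hmM.le
      (hcont.mono fun x hx => (ha.trans ham.le).trans hx.1) ⟨hma.le, hMa.le⟩
    have hmb : m < b := hb.1.lt_of_ne (by rintro rfl; exact hma.ne hfb)
    exact ⟨b, (ha.trans_lt ham).trans hmb, (ham.trans hmb).ne', hfb⟩
  · have hm : 0 ≤ m := by
      by_contra! hm
      have ha0 : 0 < a := ha.lt_of_ne (by rintro rfl; exact h0.false)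
      exact (hmono hm.le (hm.le.trans ha0.le) ha0).not_gt h0
    obtain ⟨b, hb, hfb⟩ := intermediate_value_Icc' hm (hcont.mono Icc_subset_Ici_self)
      ⟨hma.le, h0.le⟩
    have hb0 : 0 < b := hb.1.lt_of_ne (by rintro rfl; exact h0.ne' hfb)
    have hbm : b < m := hb.2.lt_of_ne (by rintro rfl; exact hma.ne hfb)
    exact ⟨b, hb0, (hbm.trans hma').ne, hfb⟩

theorem existsUnique_ne_apply_eq (hcont : ContinuousOn f (Ici 0))
    (hanti : StrictAntiOn f (Icc 0 m)) (hmono : StrictMonoOn f (Ici m))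
    (htop : Tendsto f atTop atTop) {a : ℝ} (ha : 0 ≤ a) (ham : a ≠ m) (h0 : f a < f 0) :
    ∃! b, 0 < b ∧ b ≠ a ∧ f b = f a := by
  obtain ⟨b, hb⟩ := exists_ne_apply_eq hcont hanti hmono htop ha ham h0
  refine ⟨b, hb, fun c ⟨hc0, hca, hfc⟩ => ?_⟩
  by_contra hcb
  -- any two of the three distinct points `a, b, c` of one level set straddle `m`
  have hab := sub_mul_sub_neg_of_apply_eq hanti hmono ha hb.1.le hb.2.1.symm hb.2.2.symm
  have hac := sub_mul_sub_neg_of_apply_eq hanti hmono ha hc0.le hca.symm hfc.symm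
  have hbc := sub_mul_sub_neg_of_apply_eq hanti hmono hb.1.le hc0.le (Ne.symm hcb)
    (hb.2.2.trans hfc.symm)
  nlinarith [mul_pos_of_neg_of_neg hab hac, sq_nonneg (a - m)]

end Valley

noncomputable def rpowTrinomial (A B C p q w : ℝ) : ℝ := A * w ^ p - B * w ^ q + C

section RpowTrinomial

variable {A B C p q : ℝ}

theorem continuous_rpowTrinomial (hp : 0 ≤ p) (hq : 0 ≤ q) :
    Continuous (rpowTrinomial A B C p q) := by
  unfold rpowTrinomial
  have := Real.continuous_rpow_const hp
  have := Real.continuous_rpow_const hq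
  fun_prop

theorem rpowTrinomial_zero (hp : p ≠ 0) (hq : q ≠ 0) : rpowTrinomial A B C p q 0 = C := by
  simp [rpowTrinomial, Real.zero_rpow hp, Real.zero_rpow hq]

theorem rpowTrinomial_one : rpowTrinomial A B C p q 1 = A - B + C := by
  simp [rpowTrinomial]

theorem hasDerivAt_rpowTrinomial {x : ℝ} (hx : 0 < x) :
    HasDerivAt (rpowTrinomial A B C p q) (x ^ (q - 1) * (A * p * x ^ (p - q) - B * q)) x := by
  have hp := (Real.hasDerivAt_rpow_const (p := p) (Or.inl hx.ne')).const_mul A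
  have hq := (Real.hasDerivAt_rpow_const (p := q) (Or.inl hx.ne')).const_mul B
  refine ((hp.sub hq).add_const C).congr_deriv ?_
  rw [show p - 1 = (q - 1) + (p - q) by ring, Real.rpow_add hx]
  ring

theorem tendsto_rpowTrinomial_atTop (hA : 0 < A) (hq : 0 < q) (hqp : q < p) :
    Tendsto (rpowTrinomial A B C p q) atTop atTop := by
  have hlead : Tendsto (fun w : ℝ => A * w ^ (p - q) - B) atTop atTop :=
    tendsto_atTop_add_const_right _ (-B)
      ((tendsto_rpow_atTop (sub_pos.2 hqp)).const_mul_atTop hA)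
  refine (tendsto_atTop_add_const_right _ C
    ((tendsto_rpow_atTop hq).atTop_mul_atTop₀ hlead)).congr' ?_
  filter_upwards [eventually_gt_atTop 0] with w hw
  rw [rpowTrinomial, show p = q + (p - q) by ring, Real.rpow_add hw]
  ring_nf

variable {m : ℝ}

theorem strictAntiOn_rpowTrinomial (hA : 0 < A) (hq : 0 < q) (hqp : q < p)
    (hcrit : A * p * m ^ (p - q) = B * q) : StrictAntiOn (rpowTrinomial A B C p q) (Icc 0 m) := by
  refine strictAntiOn_of_deriv_neg (convex_Icc 0 m)
    (continuous_rpowTrinomial (hq.trans hqp).le hq.le).continuousOn fun x hx => ?_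
  rw [interior_Icc] at hx
  rw [(hasDerivAt_rpowTrinomial hx.1).deriv]
  refine mul_neg_of_pos_of_neg (Real.rpow_pos_of_pos hx.1 _) (sub_neg.2 ?_)
  calc A * p * x ^ (p - q) < A * p * m ^ (p - q) :=
        mul_lt_mul_of_pos_left (Real.rpow_lt_rpow hx.1.le hx.2 (sub_pos.2 hqp))
          (mul_pos hA (hq.trans hqp))
    _ = B * q := hcrit

theorem strictMonoOn_rpowTrinomial (hA : 0 < A) (hq : 0 < q) (hqp : q < p) (hm : 0 ≤ m)
    (hcrit : A * p * m ^ (p - q) = B * q) : StrictMonoOn (rpowTrinomial A B C p q) (Ici m) := by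
  refine strictMonoOn_of_deriv_pos (convex_Ici m)
    (continuous_rpowTrinomial (hq.trans hqp).le hq.le).continuousOn fun x hx => ?_
  rw [interior_Ici] at hx
  have hx0 : 0 < x := hm.trans_lt hx
  rw [(hasDerivAt_rpowTrinomial hx0).deriv]
  refine mul_pos (Real.rpow_pos_of_pos hx0 _) (sub_pos.2 ?_)
  calc B * q = A * p * m ^ (p - q) := hcrit.symm
    _ < A * p * x ^ (p - q) :=
        mul_lt_mul_of_pos_left (Real.rpow_lt_rpow hm hx (sub_pos.2 hqp))
          (mul_pos hA (hq.trans hqp))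

end RpowTrinomial

-- Since `w̄ ^ ℓ = (γ + k²) / (γ + 1)`, this is the critical-point equation `A p w̄^(p-q) = B q`
-- of `g`; cleared of denominators it reads `γ ℓ = ℓ + 2`.
theorem critical_point_identity {γ k l : ℝ} (hγ : γ ≠ 0) (hγ' : γ + 1 ≠ 0) (hk : k ≠ 0)
    (hl : l * (γ - 1) = 2) :
    1 / k ^ 2 * (2 * (l + 1)) * ((γ + k ^ 2) / (γ + 1)) = (1 / k ^ 2 + 1 / γ) * (l + 2) := by
  field_simp
  linear_combination (γ + k ^ 2) * hl

/-- properties of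
`g(w) = (1/k²) w^{2(ℓ+1)} − (1/k² + 1/γ) w^{ℓ+2} + 1/γ` with `ℓ = 2/(γ−1)`,
for `k ≠ 0`, `k² ≠ 1`: `g(1) = 0`, `g → +∞` at `+∞`, `g` has a unique global
minimum on `(0,∞)` at `w̄ = ((γ+k²)/(γ+1))^{1/ℓ}` (with `w̄ > 1` iff `k² > 1`),
and `g` has exactly one zero on `(0,∞)` different from `1`, lying on the same
side of `1` as `w̄`. -/
theorem stmt_19 (γ : ℝ) (hγ : 1 < γ) (k : ℝ) (hk : k ≠ 0) (hk1 : k ^ 2 ≠ 1) :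
    let l : ℝ := 2 / (γ - 1)
    let g : ℝ → ℝ := fun w =>
      (1 / k ^ 2) * w ^ (2 * (l + 1)) - (1 / k ^ 2 + 1 / γ) * w ^ (l + 2) + 1 / γ
    let wbar : ℝ := ((γ + k ^ 2) / (γ + 1)) ^ (1 / l)
    g 1 = 0 ∧
    Filter.Tendsto g Filter.atTop Filter.atTop ∧
    (∀ w : ℝ, 0 < w → w ≠ wbar → g wbar < g w) ∧
    (1 < k ^ 2 → 1 < wbar) ∧ (k ^ 2 < 1 → wbar < 1) ∧
    (∃! w : ℝ, 0 < w ∧ w ≠ 1 ∧ g w = 0) ∧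
    (∀ w : ℝ, 0 < w → w ≠ 1 → g w = 0 →
      ((1 < k ^ 2 → 1 < w) ∧ (k ^ 2 < 1 → w < 1))) := by
  intro l g wbar
  have hl : 0 < l := div_pos two_pos (by linarith)
  have hA : 0 < 1 / k ^ 2 := by positivity
  have hq : 0 < l + 2 := by linarith
  have hqp : l + 2 < 2 * (l + 1) := by linarith
  have hbase : 0 < (γ + k ^ 2) / (γ + 1) := by positivity
  have hwbar0 : 0 ≤ wbar := Real.rpow_nonneg hbase.le _
  have hcrit : 1 / k ^ 2 * (2 * (l + 1)) * wbar ^ (2 * (l + 1) - (l + 2)) =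
      (1 / k ^ 2 + 1 / γ) * (l + 2) := by
    rw [show 2 * (l + 1) - (l + 2) = l by ring]
    simp only [wbar]
    rw [← Real.rpow_mul hbase.le, one_div_mul_cancel hl.ne', Real.rpow_one]
    exact critical_point_identity (by linarith) (by linarith) hk
      (div_mul_cancel₀ 2 (by linarith))
  have hcont : Continuous g := continuous_rpowTrinomial (by linarith) hq.le
  have htop : Tendsto g atTop atTop := tendsto_rpowTrinomial_atTop hA hq hqp
  have hanti : StrictAntiOn g (Icc 0 wbar) := strictAntiOn_rpowTrinomial hA hq hqp hcrit
  have hmono : StrictMonoOn g (Ici wbar) := strictMonoOn_rpowTrinomial hA hq hqp hwbar0 hcrit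
  have hg1 : g 1 = 0 := rpowTrinomial_one.trans (by ring)
  have hg0 : g 0 = 1 / γ := rpowTrinomial_zero (by linarith) hq.ne'
  have hwbar_gt : 1 < k ^ 2 → 1 < wbar := fun hk2 =>
    Real.one_lt_rpow ((one_lt_div (by linarith)).2 (by linarith)) (by positivity)
  have hwbar_lt : k ^ 2 < 1 → wbar < 1 := fun hk2 =>
    Real.rpow_lt_one hbase.le ((div_lt_one (by linarith)).2 (by linarith)) (by positivity)
  have hwbar_ne : 1 ≠ wbar := by
    rcases hk1.lt_or_gt with hk2 | hk2
    exacts [(hwbar_lt hk2).ne', (hwbar_gt hk2).ne]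
  refine ⟨hg1, htop, fun w hw hne => apply_lt_apply_of_strictAntiOn_of_strictMonoOn hanti hmono
    hw.le hne, hwbar_gt, hwbar_lt, ?_, fun w hw hw1 hgw => ?_⟩
  · have h10 : g 1 < g 0 := by rw [hg1, hg0]; positivity
    simpa only [hg1] using
      existsUnique_ne_apply_eq hcont.continuousOn hanti hmono htop zero_le_one hwbar_ne h10
  · have hside := sub_mul_sub_neg_of_apply_eq hanti hmono zero_le_one hw.le hw1.symm
      (hg1.trans hgw.symm)
    constructor <;> intro hk2
    · nlinarith [hwbar_gt hk2]
    · nlinarith [hwbar_lt hk2]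
end
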